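/- Let B : ℝ² → M₂(ℂ) be smooth, Λ_h-periodic and Hermitian-valued, let k ∈ ℝ², let Φ₁ : ℝ² → ℂ be smooth and k-pseudoperiodic, and set Φ₁′(x) = Φ₁(−x) (which is (−k)-pseudoperiodic; it equals C∘P∘C applied to Φ₁, i.e. the conjugate of the parity–conjugate of Φ₁). (a) If B(x) has real entries for all x and B(−x) = −B(x) for all x, then ∫_{Ω_h} conj(Φ₁′)(L^B Φ₁′) dx = −∫_{Ω_h} conj(Φ₁)(L^B Φ₁) dx. (b) If conj(B(x)) = −B(x) and B(−x) = B(x) for all x, then ∫_{Ω_h} conj(Φ₁′)(L^B Φ₁′) dx = +∫_{Ω_h} conj(Φ₁)(L^B Φ₁) dx. -/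

import Mathlib

open Matrix MeasureTheory Complex

noncomputable section

abbrev V2 : Type := Fin 2 → ℝ
abbrev M2 : Type := Matrix (Fin 2) (Fin 2) ℂ

/-- Partial derivative in coordinate direction `i`. -/
noncomputable def pd (i : Fin 2) (f : V2 → ℂ) (x : V2) : ℂ :=
  fderiv ℝ f x (Pi.single i 1)

/-- The divergence-form operator `L^A f = -∑ ∂_i (a_{ij} ∂_j f)`. -/
noncomputable def LA (A : V2 → M2) (f : V2 → ℂ) (x : V2) : ℂ :=
  -∑ i : Fin 2, ∑ j : Fin 2, pd i (fun y => A y i j * pd j f y) x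

/-- Lattice basis vector `v₁ = (√3/2, 1/2)`. -/
def v1 : V2 := ![Real.sqrt 3 / 2, 1 / 2]

/-- Lattice basis vector `v₂ = (√3/2, -1/2)`. -/
def v2 : V2 := ![Real.sqrt 3 / 2, -(1 / 2)]

/-- `Λ_h`-periodicity of a matrix-valued function. -/
def perM (A : V2 → M2) : Prop := ∀ x : V2, ∀ m n : ℤ, A (x + m • v1 + n • v2) = A x

/-- `k`-pseudoperiodicity: `f(x + v) = e^{i k·v} f(x)` for all lattice vectors `v`. -/
def pseudoPer (k : V2) (f : V2 → ℂ) : Prop :=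
  ∀ x : V2, ∀ m n : ℤ,
    f (x + m • v1 + n • v2) =
      Complex.exp (Complex.I * ((k ⬝ᵥ ((m • v1 + n • v2 : V2)) : ℝ) : ℂ)) * f x

/-- The fundamental cell `Ω_h = {t₁ v₁ + t₂ v₂ : 0 ≤ t₁, t₂ ≤ 1}`. -/
def Ωh : Set V2 :=
  {y | ∃ t1 t2 : ℝ, t1 ∈ Set.Icc (0:ℝ) 1 ∧ t2 ∈ Set.Icc (0:ℝ) 1 ∧ y = t1 • v1 + t2 • v2}

/-! ### Auxiliary lemmas -/

lemma pd_comp_neg (f : V2 → ℂ) (j : Fin 2) (x : V2) (hf : DifferentiableAt ℝ f (-x)) :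
    pd j (fun y => f (-y)) x = -pd j f (-x) := by
  have h : (fun y : V2 => f (-y)) = f ∘ (fun y : V2 => -y) := rfl
  have hneg : DifferentiableAt ℝ (fun y : V2 => -y) x := differentiable_id.neg.differentiableAt
  rw [pd, h, fderiv_comp x hf hneg]
  have h2 : fderiv ℝ (fun y : V2 => -y) x = -(ContinuousLinearMap.id ℝ V2) := by
    rw [fderiv_fun_neg, fderiv_id']
  rw [h2]
  simp [pd]

lemma pd_comp_add (f : V2 → ℂ) (j : Fin 2) (v x : V2) (hf : DifferentiableAt ℝ f (x + v)) :
    pd j (fun y => f (y + v)) x = pd j f (x + v) := by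
  have h : (fun y : V2 => f (y + v)) = f ∘ (fun y : V2 => y + v) := rfl
  have hadd : DifferentiableAt ℝ (fun y : V2 => y + v) x :=
    (differentiable_id.add_const v).differentiableAt
  rw [pd, h, fderiv_comp x hf hadd]
  have h2 : fderiv ℝ (fun y : V2 => y + v) x = ContinuousLinearMap.id ℝ V2 := by
    rw [fderiv_add_const, fderiv_id']
  rw [h2]; rfl

lemma pd_neg' (f : V2 → ℂ) (j : Fin 2) (x : V2) : pd j (fun y => -f y) x = -pd j f x := by
  simp [pd, fderiv_neg]

lemma pd_const_mul (f : V2 → ℂ) (c : ℂ) (j : Fin 2) (x : V2) (hf : DifferentiableAt ℝ f x) :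
    pd j (fun y => c * f y) x = c * pd j f x := by
  simp [pd, fderiv_const_mul hf c]

lemma contDiff_pd (f : V2 → ℂ) (hf : ContDiff ℝ (⊤ : ℕ∞) f) (j : Fin 2) : ContDiff ℝ (⊤ : ℕ∞) (pd j f) :=
  (hf.fderiv_right (le_refl _)).clm_apply contDiff_const

lemma neg_lattice (x : V2) (m n : ℤ) :
    -(x + m • v1 + n • v2) = -x + (-m) • v1 + (-n) • v2 := by
  simp [neg_add, neg_zsmul]; abel

lemma lattice_mem_iff (x : V2) :
    -(x + (-(v1 + v2))) ∈ Ωh ↔ x ∈ Ωh := by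
  constructor
  · rintro ⟨t1, t2, ht1, ht2, h⟩
    refine ⟨1 - t1, 1 - t2, ⟨by linarith [ht1.2], by linarith [ht1.1]⟩,
      ⟨by linarith [ht2.2], by linarith [ht2.1]⟩, ?_⟩
    have hx : x = v1 + v2 - (t1 • v1 + t2 • v2) := by rw [← h]; abel
    rw [hx]; module
  · rintro ⟨t1, t2, ht1, ht2, h⟩
    refine ⟨1 - t1, 1 - t2, ⟨by linarith [ht1.2], by linarith [ht1.1]⟩,
      ⟨by linarith [ht2.2], by linarith [ht2.1]⟩, ?_⟩
    rw [h]; module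

lemma LA_neg (A : V2 → M2) (f : V2 → ℂ) (x : V2) :
    LA (fun y => -(A y)) f x = -(LA A f x) := by
  unfold LA
  have h : ∀ i j : Fin 2,
      pd i (fun y => (-(A y)) i j * pd j f y) x = -pd i (fun y => A y i j * pd j f y) x := by
    intro i j
    have h' : (fun y => (-(A y)) i j * pd j f y) = fun y => -(A y i j * pd j f y) := by
      funext y; simp [Matrix.neg_apply]
    rw [h', pd_neg']
  simp only [h, Finset.sum_neg_distrib, neg_neg]

section main

variable (B : V2 → M2) (k : V2) (Φ₁ : V2 → ℂ)

lemma LA_flip (hsm : ∀ i j, ContDiff ℝ (⊤ : ℕ∞) fun x => B x i j) (h1sm : ContDiff ℝ (⊤ : ℕ∞) Φ₁) (x : V2) :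
    LA B (fun y => Φ₁ (-y)) x = LA (fun y => B (-y)) Φ₁ (-x) := by
  unfold LA
  congr 1
  refine Finset.sum_congr rfl fun i _ => Finset.sum_congr rfl fun j _ => ?_
  have hg : ContDiff ℝ (⊤ : ℕ∞) (fun z : V2 => B (-z) i j * pd j Φ₁ z) :=
    ((hsm i j).comp contDiff_neg).mul (contDiff_pd Φ₁ h1sm j)
  have e1 : (fun y : V2 => B y i j * pd j (fun z => Φ₁ (-z)) y)
      = fun y : V2 => -((fun z : V2 => B (-z) i j * pd j Φ₁ z) (-y)) := by
    funext y
    rw [pd_comp_neg Φ₁ j y (h1sm.differentiable (by simp) _)]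
    simp
  rw [e1, pd_neg', pd_comp_neg _ i x (hg.differentiable (by simp) _), neg_neg]

lemma pd_pseudo (h1sm : ContDiff ℝ (⊤ : ℕ∞) Φ₁) (h1p : pseudoPer k Φ₁) (j : Fin 2) (x : V2) (m n : ℤ) :
    pd j Φ₁ (x + m • v1 + n • v2) =
      Complex.exp (Complex.I * ((k ⬝ᵥ ((m • v1 + n • v2 : V2)) : ℝ) : ℂ)) * pd j Φ₁ x := by
  set v : V2 := m • v1 + n • v2 with hv
  set e : ℂ := Complex.exp (Complex.I * ((k ⬝ᵥ (v : V2) : ℝ) : ℂ)) with he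
  have hx : x + m • v1 + n • v2 = x + v := by rw [hv]; abel
  rw [hx]
  have h1 : pd j (fun y => Φ₁ (y + v)) x = pd j Φ₁ (x + v) :=
    pd_comp_add Φ₁ j v x (h1sm.differentiable (by simp) _)
  have h2 : (fun y : V2 => Φ₁ (y + v)) = fun y => e * Φ₁ y := by
    funext y
    have hy : y + v = y + m • v1 + n • v2 := by rw [hv]; abel
    rw [hy, h1p y m n]
  rw [← h1, h2, pd_const_mul Φ₁ e j x (h1sm.differentiable (by simp) _)]

lemma G_per (hsm : ∀ i j, ContDiff ℝ (⊤ : ℕ∞) fun x => B x i j) (hper : perM B)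
    (h1sm : ContDiff ℝ (⊤ : ℕ∞) Φ₁) (h1p : pseudoPer k Φ₁) (x : V2) (m n : ℤ) :
    starRingEnd ℂ (Φ₁ (x + m • v1 + n • v2)) * LA (fun y => B (-y)) Φ₁ (x + m • v1 + n • v2)
      = starRingEnd ℂ (Φ₁ x) * LA (fun y => B (-y)) Φ₁ x := by
  set v : V2 := m • v1 + n • v2 with hv
  set e : ℂ := Complex.exp (Complex.I * ((k ⬝ᵥ (v : V2) : ℝ) : ℂ)) with he
  have hBt : ∀ y : V2, B (-(y + v)) = B (-y) := by
    intro y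
    rw [show y + v = y + m • v1 + n • v2 from by rw [hv]; abel, neg_lattice,
      hper (-y) (-m) (-n)]
  have hLA : LA (fun y => B (-y)) Φ₁ (x + m • v1 + n • v2) = e * LA (fun y => B (-y)) Φ₁ x := by
    unfold LA
    have key : ∀ i j : Fin 2,
        pd i (fun y => B (-y) i j * pd j Φ₁ y) (x + m • v1 + n • v2)
          = e * pd i (fun y => B (-y) i j * pd j Φ₁ y) x := by
      intro i j
      set F : V2 → ℂ := fun z : V2 => B (-z) i j * pd j Φ₁ z with hF
      have hg : ContDiff ℝ (⊤ : ℕ∞) F :=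
        ((hsm i j).comp contDiff_neg).mul (contDiff_pd Φ₁ h1sm j)
      have hx : x + m • v1 + n • v2 = x + v := by rw [hv]; abel
      have h2 : (fun y : V2 => F (y + v)) = fun y => e * F y := by
        funext y
        show B (-(y + v)) i j * pd j Φ₁ (y + v) = e * (B (-y) i j * pd j Φ₁ y)
        rw [hBt y, show y + v = y + m • v1 + n • v2 from by rw [hv]; abel,
          pd_pseudo k Φ₁ h1sm h1p j y m n, ← hv, ← he]
        ring
      rw [hx, ← pd_comp_add F i v x (hg.differentiable (by simp) _), h2,
        pd_const_mul F e i x (hg.differentiable (by simp) _)]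
    simp only [key, ← Finset.mul_sum, ← mul_neg]
  have hconj : (starRingEnd ℂ) e * e = 1 := by
    rw [he, ← Complex.exp_conj, ← Complex.exp_add,
      show (starRingEnd ℂ) (Complex.I * ((k ⬝ᵥ (v : V2) : ℝ) : ℂ))
          + Complex.I * ((k ⬝ᵥ (v : V2) : ℝ) : ℂ) = 0 from by
        simp [Complex.conj_I, Complex.conj_ofReal],
      Complex.exp_zero]
  rw [hLA, h1p x m n, ← hv, ← he, _root_.map_mul]
  calc (starRingEnd ℂ) e * (starRingEnd ℂ) (Φ₁ x) * (e * LA (fun y => B (-y)) Φ₁ x)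
      = ((starRingEnd ℂ) e * e) * ((starRingEnd ℂ) (Φ₁ x) * LA (fun y => B (-y)) Φ₁ x) := by
        ring
    _ = (starRingEnd ℂ) (Φ₁ x) * LA (fun y => B (-y)) Φ₁ x := by rw [hconj, one_mul]


/-- With `Φ₁′(x) = Φ₁(-x)`:
(a) if `B` is real-valued and odd, `⟨Φ₁′, L^B Φ₁′⟩ = -⟨Φ₁, L^B Φ₁⟩`;
(b) if `B` is purely imaginary (`conj B = -B`) and even, `⟨Φ₁′, L^B Φ₁′⟩ = ⟨Φ₁, L^B Φ₁⟩`. -/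
theorem parity_conjugate_matrix_elements (B : V2 → M2)
    (hsm : ∀ i j, ContDiff ℝ (⊤ : ℕ∞) fun x => B x i j)
    (hper : perM B)
    (hherm : ∀ x : V2, (B x).IsHermitian)
    (k : V2) (Φ₁ : V2 → ℂ)
    (h1sm : ContDiff ℝ (⊤ : ℕ∞) Φ₁) (h1p : pseudoPer k Φ₁)
    (Φ₁' : V2 → ℂ) (hΦ' : Φ₁' = fun x => Φ₁ (-x)) :
    (((∀ x : V2, (B x).map (starRingEnd ℂ) = B x) ∧ (∀ x : V2, B (-x) = -(B x))) →
      (∫ x in Ωh, starRingEnd ℂ (Φ₁' x) * LA B Φ₁' x) =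
        -(∫ x in Ωh, starRingEnd ℂ (Φ₁ x) * LA B Φ₁ x)) ∧
    (((∀ x : V2, (B x).map (starRingEnd ℂ) = -(B x)) ∧ (∀ x : V2, B (-x) = B x)) →
      (∫ x in Ωh, starRingEnd ℂ (Φ₁' x) * LA B Φ₁' x) =
        (∫ x in Ωh, starRingEnd ℂ (Φ₁ x) * LA B Φ₁ x)) := by
  subst hΦ'
  beta_reduce
  have hmain : (∫ x in Ωh, starRingEnd ℂ (Φ₁ (-x)) * LA B (fun y => Φ₁ (-y)) x)
      = ∫ x in Ωh, starRingEnd ℂ (Φ₁ x) * LA (fun y => B (-y)) Φ₁ x := by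
    set G : V2 → ℂ := fun z => starRingEnd ℂ (Φ₁ z) * LA (fun y => B (-y)) Φ₁ z with hG
    have step1 : ∀ x : V2, starRingEnd ℂ (Φ₁ (-x)) * LA B (fun y => Φ₁ (-y)) x = G (-x) := by
      intro x
      rw [hG]
      simp only []
      rw [LA_flip B Φ₁ hsm h1sm x]
    set S : Set V2 := Neg.neg ⁻¹' Ωh with hS
    have hpre1 : (fun x : V2 => -x) ⁻¹' S = Ωh := by
      ext x
      simp only [hS, Set.mem_preimage, neg_neg]
    have h1 : (∫ x in Ωh, G (-x)) = ∫ y in S, G y := by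
      rw [← hpre1]
      exact (Measure.measurePreserving_neg volume).setIntegral_preimage_emb
        (MeasurableEquiv.neg V2).measurableEmbedding G S
    have hpre2 : (fun x : V2 => x + (-(v1 + v2))) ⁻¹' S = Ωh := by
      ext x
      simp only [hS, Set.mem_preimage]
      exact lattice_mem_iff x
    have h2 : (∫ x in Ωh, G (x + (-(v1 + v2)))) = ∫ y in S, G y := by
      rw [← hpre2]
      exact (measurePreserving_add_right volume (-(v1 + v2))).setIntegral_preimage_emb
        (MeasurableEquiv.addRight (-(v1 + v2))).measurableEmbedding G S
    have h3 : ∀ x : V2, G (x + (-(v1 + v2))) = G x := by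
      intro x
      have h := G_per B k Φ₁ hsm hper h1sm h1p x (-1) (-1)
      have hx : x + (-1 : ℤ) • v1 + (-1 : ℤ) • v2 = x + (-(v1 + v2)) := by
        simp only [neg_zsmul, one_zsmul]
        abel
      rw [hx] at h
      exact h
    calc (∫ x in Ωh, starRingEnd ℂ (Φ₁ (-x)) * LA B (fun y => Φ₁ (-y)) x)
        = ∫ x in Ωh, G (-x) := by simp only [step1]
      _ = ∫ y in S, G y := h1
      _ = ∫ x in Ωh, G (x + (-(v1 + v2))) := h2.symm
      _ = ∫ x in Ωh, G x := by simp only [h3]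
  constructor
  · rintro ⟨-, hodd⟩
    have hB : (fun y : V2 => B (-y)) = fun y => -(B y) := funext hodd
    rw [hmain, hB]
    have hpt : ∀ x : V2, starRingEnd ℂ (Φ₁ x) * LA (fun y => -(B y)) Φ₁ x
        = -(starRingEnd ℂ (Φ₁ x) * LA B Φ₁ x) := by
      intro x
      rw [LA_neg]
      ring
    simp only [hpt, integral_neg]
  · rintro ⟨-, heven⟩
    have hB : (fun y : V2 => B (-y)) = B := funext heven
    rw [hmain, hB]
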